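/- For all integers N ≥ 0 and ℓ ≥ 0 and all real x, the value of A_N^ℓ at y = 0 is A_N^ℓ(x, 0) = ((N+ℓ)! / N!) · x^ℓ. -/
import Mathlib

/-- The tridiagonal matrix `M_ℓ^{(N)}(x)` over `ℝ` (1-based indices): diagonal entries
`(N+i)(x-ℓ+2i-1)`, superdiagonal entries `N+i`, subdiagonal entries
`(M)_{i+1,i} = -(N+i+1)·i·(ℓ-i)`. -/
def Mmat (N ℓ : ℕ) (x : ℝ) : Matrix (Fin ℓ) (Fin ℓ) ℝ :=
  Matrix.of fun i j =>
    if (i : ℕ) = (j : ℕ) then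
      ((N : ℝ) + (i : ℕ) + 1) * (x - (ℓ : ℝ) + 2 * ((i : ℕ) + 1) - 1)
    else if (j : ℕ) = (i : ℕ) + 1 then (N : ℝ) + (i : ℕ) + 1
    else if (i : ℕ) = (j : ℕ) + 1 then
      -(((N : ℝ) + (j : ℕ) + 2) * ((j : ℕ) + 1 : ℝ) * ((ℓ : ℝ) - ((j : ℕ) + 1)))
    else 0

/-- The value `A_N^ℓ(x,y) = det(y·I_ℓ + M_ℓ^{(N)}(x))`. -/
def APoly (N ℓ : ℕ) (x y : ℝ) : ℝ :=
  (y • (1 : Matrix (Fin ℓ) (Fin ℓ) ℝ) + Mmat N ℓ x).det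



noncomputable def Pv (i j : ℕ) : ℝ := if i ≤ j then 1/((j-i).factorial : ℝ) else 0

lemma Pv_of_le {i j : ℕ} (h : i ≤ j) : Pv i j = 1/((j-i).factorial : ℝ) := if_pos h
lemma Pv_of_gt {i j : ℕ} (h : j < i) : Pv i j = 0 := if_neg (by omega)

lemma fact_ne (n : ℕ) : ((n.factorial : ℝ)) ≠ 0 := by
  exact_mod_cast n.factorial_ne_zero

lemma key (ℓ i k : ℕ) (hi : i < ℓ) (hk : k < ℓ) :
    (2*(i:ℝ)+1-(ℓ:ℝ)) * Pv i k
      + (if i+1 < ℓ then Pv (i+1) k else 0)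
      + (if i = 0 then 0 else (-(i:ℝ)*((ℓ:ℝ)-(i:ℝ))) * Pv (i-1) k)
    = if k+1 < ℓ then Pv i (k+1) * (((k:ℝ)+1)*((k:ℝ)+1-(ℓ:ℝ))) else 0 := by
  rcases Nat.lt_or_ge k i with hik | hik
  · -- i ≥ k+1
    rcases Nat.eq_or_lt_of_le hik with he | hlt
    · -- i = k+1
      have h0 : i ≠ 0 := by omega
      have hkl : k + 1 < ℓ := by omega
      rw [if_neg h0, if_pos hkl, Pv_of_gt (by omega), Pv_of_gt (by omega),
        Pv_of_le (by omega : i - 1 ≤ k), Pv_of_le (by omega : i ≤ k + 1)]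
      have h1 : k - (i-1) = 0 := by omega
      have h2 : k + 1 - i = 0 := by omega
      have h3 : ((i:ℕ):ℝ) = (k:ℝ)+1 := by exact_mod_cast congrArg (Nat.cast : ℕ → ℝ) he.symm
      rw [h1, h2, h3]
      norm_num [Nat.factorial]
      ring
    · -- i > k+1
      rw [Pv_of_gt (by omega), Pv_of_gt (by omega)]
      rw [Pv_of_gt (by omega : k < i - 1)]
      rw [show (if k+1 < ℓ then Pv i (k+1) * (((k:ℝ)+1)*((k:ℝ)+1-(ℓ:ℝ))) else 0) = 0 by
        split_ifs with h
        · rw [Pv_of_gt (by omega), zero_mul]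
        · rfl]
      simp
  · -- i ≤ k
    obtain ⟨m, rfl⟩ : ∃ m, k = i + m := ⟨k - i, by omega⟩
    rcases Nat.eq_zero_or_pos m with rfl | hm
    · -- i = k
      simp only [Nat.add_zero] at *
      rw [Pv_of_le le_rfl, Nat.sub_self, Pv_of_gt (by omega)]
      rw [ite_self]
      have hle : ℓ = i + 1 ∨ i + 1 < ℓ := by omega
      rcases Nat.eq_zero_or_pos i with rfl | hi0
      · simp only [if_pos rfl]
        rcases hle with he | hlt
        · rw [if_neg (show ¬ (0+1 < ℓ) by omega), he]
          norm_num
        · rw [if_pos hlt]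
          simp [Pv, Nat.factorial]
      · rw [if_neg (show ¬ i = 0 by omega), Pv_of_le (by omega : i - 1 ≤ i),
          show i - (i-1) = 1 by omega]
        rcases hle with he | hlt
        · rw [if_neg (show ¬ (i+1 < ℓ) by omega)]
          have h3 : (ℓ:ℝ) = (i:ℝ)+1 := by rw [he]; push_cast; ring
          rw [h3]
          norm_num [Nat.factorial]
          ring
        · rw [if_pos hlt, Pv_of_le (by omega : i ≤ i+1), show i + 1 - i = 1 by omega]
          norm_num [Nat.factorial]
          ring
    · -- i < k
      obtain ⟨m', rfl⟩ : ∃ m', m = m' + 1 := ⟨m - 1, by omega⟩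
      have hil : i + 1 < ℓ := by omega
      rw [if_pos hil, Pv_of_le (by omega : i ≤ i+(m'+1)), Pv_of_le (by omega : i+1 ≤ i+(m'+1)),
        show i + (m'+1) - i = m' + 1 by omega, show i + (m'+1) - (i+1) = m' by omega]
      have hsub : (if i = 0 then (0:ℝ) else (-(i:ℝ)*((ℓ:ℝ)-(i:ℝ))) * Pv (i-1) (i+(m'+1)))
          = (-(i:ℝ)*((ℓ:ℝ)-(i:ℝ))) * (1/((m'+2).factorial : ℝ)) := by
        rcases Nat.eq_zero_or_pos i with rfl | hi0
        · simp
        · rw [if_neg (show ¬ i = 0 by omega), Pv_of_le (by omega : i-1 ≤ i+(m'+1)), show i + (m'+1) - (i-1) = m'+2 by omega]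
      rw [hsub]
      have hgoal : (2*(i:ℝ)+1-(ℓ:ℝ)) * (1/((m'+1).factorial : ℝ)) + 1/((m'.factorial : ℝ))
          + (-(i:ℝ)*((ℓ:ℝ)-(i:ℝ))) * (1/((m'+2).factorial : ℝ))
          = (1/((m'+2).factorial : ℝ)) * (((i:ℝ)+(m':ℝ)+2)*((i:ℝ)+(m':ℝ)+2-(ℓ:ℝ))) := by
        have e2 : ((m'+2).factorial : ℝ) = ((m':ℝ)+2) * ((m':ℝ)+1) * (m'.factorial : ℝ) := by
          push_cast [Nat.factorial_succ]
          ring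
        have e1 : ((m'+1).factorial : ℝ) = ((m':ℝ)+1) * (m'.factorial : ℝ) := by
          push_cast [Nat.factorial_succ]
          ring
        rw [e1, e2]
        have h1 := fact_ne m'
        field_simp
        ring
      rcases Nat.lt_or_ge (i + (m'+1) + 1) ℓ with hlt | hge
      · rw [if_pos hlt, Pv_of_le (by omega : i ≤ i+(m'+1)+1), show i + (m'+1) + 1 - i = m'+2 by omega]
        rw [hgoal]
        push_cast
        ring
      · rw [if_neg (show ¬ (i+(m'+1)+1 < ℓ) by omega), hgoal]
        have h3 : (ℓ:ℝ) = (i:ℝ) + (m':ℝ) + 2 := by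
          have : ℓ = i + m' + 2 := by omega
          rw [this]; push_cast; ring
        rw [h3]
        ring

def Tm (ℓ : ℕ) : Matrix (Fin ℓ) (Fin ℓ) ℝ :=
  Matrix.of fun i j =>
    if (i : ℕ) = (j : ℕ) then 2*((i:ℕ):ℝ)+1-(ℓ:ℝ)
    else if (j : ℕ) = (i : ℕ) + 1 then 1
    else if (i : ℕ) = (j : ℕ) + 1 then -(((j:ℕ):ℝ)+1)*((ℓ:ℝ)-1-((j:ℕ):ℝ))
    else 0

noncomputable def Pm (ℓ : ℕ) : Matrix (Fin ℓ) (Fin ℓ) ℝ :=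
  Matrix.of fun i j => Pv (i:ℕ) (j:ℕ)

def Lm (ℓ : ℕ) : Matrix (Fin ℓ) (Fin ℓ) ℝ :=
  Matrix.of fun i j =>
    if (i : ℕ) = (j : ℕ) + 1 then (((j:ℕ):ℝ)+1)*(((j:ℕ):ℝ)+1-(ℓ:ℝ)) else 0

lemma sum_guard {ℓ : ℕ} (m : ℕ) (f : Fin ℓ → ℝ) :
    ∑ j : Fin ℓ, (if (j:ℕ) = m then f j else 0) = if h : m < ℓ then f ⟨m, h⟩ else 0 := by
  split_ifs with h
  · rw [Fintype.sum_eq_single (⟨m, h⟩ : Fin ℓ)]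
    · simp
    · intro b hb
      rw [if_neg]
      simpa [Fin.ext_iff] using hb
  · apply Finset.sum_eq_zero
    intro j _
    have := j.2
    rw [if_neg]
    omega

lemma TP_eq_PL (ℓ : ℕ) : Tm ℓ * Pm ℓ = Pm ℓ * Lm ℓ := by
  ext i k
  rw [Matrix.mul_apply, Matrix.mul_apply]
  have hsplit : ∀ j : Fin ℓ, Tm ℓ i j * Pm ℓ j k =
      (if (j:ℕ) = (i:ℕ) then (2*((i:ℕ):ℝ)+1-(ℓ:ℝ)) * Pv (j:ℕ) (k:ℕ) else 0)
      + (if (j:ℕ) = (i:ℕ)+1 then Pv (j:ℕ) (k:ℕ) else 0)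
      + (if (j:ℕ) = (i:ℕ)-1 then
          (if (i:ℕ) = 0 then 0 else (-(((i:ℕ):ℝ))*((ℓ:ℝ)-((i:ℕ):ℝ))) * Pv (j:ℕ) (k:ℕ))
        else 0) := by
    intro j
    simp only [Tm, Pm, Matrix.of_apply]
    split_ifs <;> try ring
    all_goals try (exfalso; omega)
    all_goals
      have h' : ((i:ℕ):ℝ) = ((j:ℕ):ℝ)+1 := by
        exact_mod_cast congrArg (Nat.cast : ℕ → ℝ) (by omega : (i:ℕ) = (j:ℕ)+1)
      rw [h']; ring
  have hR : ∀ j : Fin ℓ, Pm ℓ i j * Lm ℓ j k =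
      (if (j:ℕ) = (k:ℕ)+1 then Pv (i:ℕ) (j:ℕ) * ((((k:ℕ):ℝ)+1)*(((k:ℕ):ℝ)+1-(ℓ:ℝ))) else 0) := by
    intro j
    simp only [Pm, Lm, Matrix.of_apply, mul_ite, mul_zero]
  rw [Finset.sum_congr rfl (fun j _ => hsplit j), Finset.sum_congr rfl (fun j _ => hR j)]
  rw [Finset.sum_add_distrib, Finset.sum_add_distrib]
  rw [sum_guard ((i:ℕ)) (fun j => (2*((i:ℕ):ℝ)+1-(ℓ:ℝ)) * Pv (j:ℕ) (k:ℕ)),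
    sum_guard ((i:ℕ)+1) (fun j => Pv (j:ℕ) (k:ℕ)),
    sum_guard ((i:ℕ)-1) (fun j =>
      (if (i:ℕ) = 0 then 0 else (-(((i:ℕ):ℝ))*((ℓ:ℝ)-((i:ℕ):ℝ))) * Pv (j:ℕ) (k:ℕ))),
    sum_guard ((k:ℕ)+1) (fun j => Pv (i:ℕ) (j:ℕ) * ((((k:ℕ):ℝ)+1)*(((k:ℕ):ℝ)+1-(ℓ:ℝ))))]
  rw [dif_pos i.2, dif_pos (show (i:ℕ)-1 < ℓ by have := i.2; omega)]
  have hkey := key ℓ i k i.2 k.2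
  simp only [Fin.val_mk] at *
  by_cases h1 : (i:ℕ)+1 < ℓ <;> by_cases h2 : (k:ℕ)+1 < ℓ <;>
    simp only [dif_pos, dif_neg, h1, h2, if_pos, if_neg, Fin.val_mk] at * <;>
    simpa [h1, h2] using hkey

lemma Mmat_eq (N ℓ : ℕ) (x : ℝ) :
    Mmat N ℓ x = Matrix.diagonal (fun i : Fin ℓ => (N:ℝ)+(i:ℕ)+1) * (x • 1 + Tm ℓ) := by
  ext i j
  rw [Matrix.diagonal_mul]
  simp only [Mmat, Tm, Matrix.add_apply, Matrix.smul_apply, Matrix.one_apply, Matrix.of_apply,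
    Fin.ext_iff, smul_eq_mul]
  split_ifs <;> try ring
  all_goals
    rename_i h1 h2 h3
    have h' : ((i:ℕ):ℝ) = ((j:ℕ):ℝ)+1 := by exact_mod_cast h3
    rw [h']; ring

lemma det_Pm (ℓ : ℕ) : (Pm ℓ).det = 1 := by
  rw [Matrix.det_of_upperTriangular]
  · apply Finset.prod_eq_one
    intro i _
    simp [Pm, Pv]
  · intro i j hij
    have h : (j:ℕ) < (i:ℕ) := hij
    simp only [Pm, Matrix.of_apply, Pv]
    rw [if_neg]
    omega

lemma det_xL (ℓ : ℕ) (x : ℝ) : (x • (1 : Matrix (Fin ℓ) (Fin ℓ) ℝ) + Lm ℓ).det = x ^ ℓ := by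
  rw [Matrix.det_of_lowerTriangular]
  · have hd : ∀ i : Fin ℓ, (x • (1 : Matrix (Fin ℓ) (Fin ℓ) ℝ) + Lm ℓ) i i = x := by
      intro i
      simp only [Matrix.add_apply, Matrix.smul_apply, Matrix.one_apply_eq, smul_eq_mul, mul_one,
        Lm, Matrix.of_apply]
      rw [if_neg (show ¬ (i:ℕ) = (i:ℕ)+1 by omega)]
      ring
    rw [Finset.prod_congr rfl fun i _ => hd i]
    simp
  · intro i j hij
    have h : (i:ℕ) < (j:ℕ) := hij
    simp only [Matrix.add_apply, Matrix.smul_apply, Lm, Matrix.of_apply, smul_eq_mul,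
      Matrix.one_apply_ne (show i ≠ j from fun hh => by subst hh; omega)]
    rw [if_neg (show ¬ (i:ℕ) = (j:ℕ)+1 by omega)]
    ring

lemma det_xT (ℓ : ℕ) (x : ℝ) : (x • (1 : Matrix (Fin ℓ) (Fin ℓ) ℝ) + Tm ℓ).det = x ^ ℓ := by
  have h : (x • (1 : Matrix (Fin ℓ) (Fin ℓ) ℝ) + Tm ℓ) * Pm ℓ
      = Pm ℓ * (x • (1 : Matrix (Fin ℓ) (Fin ℓ) ℝ) + Lm ℓ) := by
    rw [Matrix.add_mul, Matrix.mul_add, TP_eq_PL, Matrix.smul_mul, Matrix.mul_smul,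
      one_mul, mul_one]
  have h2 := congrArg Matrix.det h
  rw [Matrix.det_mul, Matrix.det_mul, det_Pm, mul_one, one_mul, det_xL] at h2
  exact h2

lemma prod_nat (N : ℕ) : ∀ ℓ : ℕ, N.factorial * ∏ i ∈ Finset.range ℓ, (N+i+1) = (N+ℓ).factorial
  | 0 => by simp
  | (ℓ+1) => by
    rw [Finset.prod_range_succ, ← mul_assoc, prod_nat N ℓ, ← Nat.add_assoc, Nat.factorial_succ,
      mul_comm]

/-- `A_N^ℓ(x, 0) = ((N+ℓ)!/N!) · x^ℓ`. -/
theorem APoly_at_zero (N ℓ : ℕ) (x : ℝ) :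
    APoly N ℓ x 0 = (((N + ℓ).factorial : ℝ) / (N.factorial : ℝ)) * x ^ ℓ := by
  have h0 : APoly N ℓ x 0 = (Mmat N ℓ x).det := by
    rw [APoly, zero_smul, zero_add]
  rw [h0, Mmat_eq, Matrix.det_mul, Matrix.det_diagonal, det_xT]
  congr 1
  have hp : (∏ i : Fin ℓ, ((N:ℝ)+(i:ℕ)+1)) = ((∏ i ∈ Finset.range ℓ, (N+i+1) : ℕ) : ℝ) := by
    rw [Fin.prod_univ_eq_prod_range (fun i => ((N:ℝ)+(i:ℕ)+1)) ℓ]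
    push_cast
    rfl
  rw [hp]
  have hN : ((N.factorial : ℝ)) ≠ 0 := fact_ne N
  rw [eq_div_iff hN, ← Nat.cast_mul, mul_comm, prod_nat N ℓ]
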